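/- If γ = (n_1,...,n_{10}) ∈ Z^{10} has all n_i ≥ 1, Σ n_i ≡ 0 mod 3, and q(γ) = −2, and additionally ⟨γ, α_i⟩ ≤ 0 for each of the ten simple roots α_{-1},...,α_8 of E10 in the physical basis, then γ is the vector whose expansion in simple roots is α_{-1}+2α_0+4α_1+6α_2+8α_3+10α_4+12α_5+8α_6+4α_7+6α_8, i.e., γ = (1,1,2,2,2,2,2,2,2,2) up to the conventions of the physical basis. -/

import Mathlib

/-- The `E₁₀` bilinear form in the physical basis. -/
def innerE10 (n m : Fin 10 → ℤ) : ℚ :=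
  (∑ i, (n i : ℚ) * (m i : ℚ)) - (1 / 9) * (∑ i, (n i : ℚ)) * (∑ i, (m i : ℚ))

/-- The `E₁₀` quadratic form in the physical basis. -/
def qE10 (n : Fin 10 → ℤ) : ℚ := innerE10 n n

/-- The standard basis vector `e_j` of `ℤ¹⁰` (0-indexed). -/
def stdVec (j : Fin 10) : Fin 10 → ℤ := fun i => if i = j then 1 else 0

/-- The simple roots `α₋₁, α₀, …, α₈` of `E₁₀` in the physical basis, indexed
by `Fin 10`. -/
def simpleRootE10 (k : Fin 10) : Fin 10 → ℤ :=
  if h : k.val ≤ 8 then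
    stdVec ⟨k.val, by omega⟩ - stdVec ⟨k.val + 1, by omega⟩
  else stdVec 7 + stdVec 8 + stdVec 9

/-!
Put `e i = m - 3 γ i`, where `∑ γ i = 3 m`. Since `q(γ) = ∑ γ i ^ 2 - m ^ 2`, the condition
`q(γ) = -2` says exactly that `(∑ e i) ^ 2 - ∑ e i ^ 2 = 18`, i.e. the pairwise products of the
`e i` sum to `9`. Anti-dominance makes `e` antitone with `e 7 ≥ 0` and `e 7 + e 8 + e 9 ≥ 0`.
Then the pair sum is at least `18 (e 7) ^ 2`, so `e 7 = 0`, which forces `e 8 = e 9 = 0` and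
makes every `e i` a nonnegative multiple of `3`; the only such vector with pair sum `9` is
`(3, 3, 0, …, 0)`, i.e. `m = 6` and `γ = (1, 1, 2, …, 2)`.
-/

lemma innerE10_add_right (n m m' : Fin 10 → ℤ) :
    innerE10 n (m + m') = innerE10 n m + innerE10 n m' := by
  simp only [innerE10, Pi.add_apply, Int.cast_add, mul_add, Finset.sum_add_distrib]
  ring

lemma innerE10_sub_right (n m m' : Fin 10 → ℤ) :
    innerE10 n (m - m') = innerE10 n m - innerE10 n m' := by
  simp only [innerE10, Pi.sub_apply, Int.cast_sub, mul_sub, Finset.sum_sub_distrib]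
  ring

lemma innerE10_stdVec (n : Fin 10 → ℤ) (j : Fin 10) :
    innerE10 n (stdVec j) = n j - (∑ i, (n i : ℚ)) / 9 := by
  simp only [innerE10, stdVec, Int.cast_ite, Int.cast_one, Int.cast_zero, mul_ite, mul_one,
    mul_zero, Finset.sum_ite_eq', Finset.mem_univ, ↓reduceIte]
  ring

lemma qE10_eq_sum_sq_sub (n : Fin 10 → ℤ) :
    qE10 n = ∑ i, (n i : ℚ) ^ 2 - (∑ i, (n i : ℚ)) ^ 2 / 9 := by
  simp only [qE10, innerE10, sq]
  ring

lemma innerE10_simpleRootE10_castSucc (n : Fin 10 → ℤ) (k : Fin 9) :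
    innerE10 n (simpleRootE10 k.castSucc) = n k.castSucc - n k.succ := by
  rw [simpleRootE10, dif_pos (show (k.castSucc : ℕ) ≤ 8 from Nat.le_of_lt_succ k.isLt),
    innerE10_sub_right, innerE10_stdVec, innerE10_stdVec]
  simp only [Fin.castSucc, Fin.succ, Fin.castAdd, Fin.castLE]
  ring

lemma innerE10_simpleRootE10_nine (n : Fin 10 → ℤ) :
    innerE10 n (simpleRootE10 9) = n 7 + n 8 + n 9 - (∑ i, (n i : ℚ)) / 3 := by
  rw [simpleRootE10, dif_neg (by decide), innerE10_add_right, innerE10_add_right,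
    innerE10_stdVec, innerE10_stdVec, innerE10_stdVec]
  ring

lemma monotone_of_innerE10_simpleRootE10_nonpos {n : Fin 10 → ℤ}
    (h : ∀ k, innerE10 n (simpleRootE10 k) ≤ 0) : Monotone n :=
  Fin.monotone_iff_le_succ.2 fun k => by
    have hk := h k.castSucc
    rw [innerE10_simpleRootE10_castSucc, sub_nonpos] at hk
    exact_mod_cast hk

lemma add_add_le_of_innerE10_simpleRootE10_nine_nonpos {n : Fin 10 → ℤ} {m : ℤ}
    (hm : ∑ i, n i = 3 * m) (h : innerE10 n (simpleRootE10 9) ≤ 0) : n 7 + n 8 + n 9 ≤ m := by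
  have hmQ : ∑ i, (n i : ℚ) = 3 * m := by exact_mod_cast hm
  rw [innerE10_simpleRootE10_nine, hmQ] at h
  have hQ : ((n 7 + n 8 + n 9 : ℤ) : ℚ) ≤ m := by push_cast; linarith
  exact_mod_cast hQ

lemma sum_sq_eq_of_qE10_eq_neg_two {n : Fin 10 → ℤ} {m : ℤ} (hm : ∑ i, n i = 3 * m)
    (hq : qE10 n = -2) : ∑ i, n i ^ 2 = m ^ 2 - 2 := by
  have hmQ : ∑ i, (n i : ℚ) = 3 * m := by exact_mod_cast hm
  rw [qE10_eq_sum_sq_sub, hmQ] at hq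
  have hQ : ∑ i, (n i : ℚ) ^ 2 = (m : ℚ) ^ 2 - 2 := by linarith
  exact_mod_cast hQ

section PairSum

variable {R : Type*} [CommRing R]

lemma sq_sum_sub_sum_sq_fin_add {k l : ℕ} (x : Fin (k + l) → R) :
    (∑ i, x i) ^ 2 - ∑ i, x i ^ 2 =
      ((∑ i, x (Fin.castAdd l i)) ^ 2 - ∑ i, x (Fin.castAdd l i) ^ 2)
      + 2 * (∑ i, x (Fin.castAdd l i)) * (∑ i, x (Fin.natAdd k i))
      + ((∑ i, x (Fin.natAdd k i)) ^ 2 - ∑ i, x (Fin.natAdd k i) ^ 2) := by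
  simp only [Fin.sum_univ_add]
  ring

lemma sq_sum_sub_sum_sq_fin_three (x : Fin 3 → R) :
    (∑ i, x i) ^ 2 - ∑ i, x i ^ 2 = 2 * (x 0 * x 1 + x 0 * x 2 + x 1 * x 2) := by
  simp only [Fin.sum_univ_three]
  ring

lemma le_sq_sum_sub_sum_sq_of_forall_le [LinearOrder R] [IsStrictOrderedRing R] {n : ℕ}
    (x : Fin n → R) {u : R} (hu : 0 ≤ u) (hx : ∀ i, u ≤ x i) :
    n * (n - 1) * u ^ 2 ≤ (∑ i, x i) ^ 2 - ∑ i, x i ^ 2 := by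
  induction n with
  | zero => simp
  | succ n ih =>
    have hsum : n * u ≤ ∑ i : Fin n, x i.succ := by
      simpa using Finset.sum_le_sum fun (i : Fin n) (_ : i ∈ Finset.univ) => hx i.succ
    have hsum_nonneg : 0 ≤ ∑ i : Fin n, x i.succ :=
      (mul_nonneg (Nat.cast_nonneg n) hu).trans hsum
    have hpairs := ih (fun i => x i.succ) fun i => hx i.succ
    rw [Fin.sum_univ_succ, Fin.sum_univ_succ]
    push_cast
    nlinarith [mul_le_mul hsum (hx 0) hu hsum_nonneg]

end PairSum

lemma le_sq_sum_sub_sum_sq_of_antitone {e : Fin 10 → ℤ} (he : Antitone e) (h7 : 0 ≤ e 7)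
    (h789 : 0 ≤ e 7 + e 8 + e 9) : 36 * e 7 ^ 2 ≤ (∑ i, e i) ^ 2 - ∑ i, e i ^ 2 := by
  set head : Fin 7 → ℤ := fun i => e (Fin.castAdd 3 i)
  have hsplit : (∑ i, e i) ^ 2 - ∑ i, e i ^ 2 = ((∑ i, head i) ^ 2 - ∑ i, head i ^ 2)
      + 2 * (∑ i, head i) * (e 7 + e 8 + e 9) + 2 * (e 7 * e 8 + e 7 * e 9 + e 8 * e 9) := by
    rw [sq_sum_sub_sum_sq_fin_add (k := 7) (l := 3) e, sq_sum_sub_sum_sq_fin_three,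
      Fin.sum_univ_three]
    rfl
  have hhead : ∀ i, e 7 ≤ head i := fun i => he (Fin.le_iff_val_le_val.2 (by simp))
  have hhead_pairs := le_sq_sum_sub_sum_sq_of_forall_le head h7 hhead
  have hhead_sum : 0 ≤ ∑ i, head i := Finset.sum_nonneg fun i _ => h7.trans (hhead i)
  have h78 : e 8 ≤ e 7 := he (by decide)
  have h89 : e 9 ≤ e 8 := he (by decide)
  have htail_pairs : -3 * e 7 ^ 2 ≤ e 7 * e 8 + e 7 * e 9 + e 8 * e 9 := by
    nlinarith [mul_nonneg (sub_nonneg.2 h78) (sub_nonneg.2 (h89.trans h78))]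
  push_cast at hhead_pairs
  nlinarith [mul_nonneg hhead_sum h789]

lemma apply_two_eq_zero_of_nonneg {e : Fin 10 → ℤ} (he : Antitone e) (hnonneg : ∀ i, 0 ≤ e i)
    (h3 : 3 ∣ e 2) (hP : (∑ i, e i) ^ 2 - ∑ i, e i ^ 2 ≤ 18) : e 2 = 0 := by
  set head : Fin 3 → ℤ := fun i => e (Fin.castAdd 7 i)
  set tail : Fin 7 → ℤ := fun i => e (Fin.natAdd 3 i)
  have hsplit : (∑ i, e i) ^ 2 - ∑ i, e i ^ 2 = ((∑ i, head i) ^ 2 - ∑ i, head i ^ 2)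
      + 2 * (∑ i, head i) * (∑ i, tail i) + ((∑ i, tail i) ^ 2 - ∑ i, tail i ^ 2) :=
    sq_sum_sub_sum_sq_fin_add (k := 3) (l := 7) e
  have hhead := le_sq_sum_sub_sum_sq_of_forall_le head (hnonneg 2)
    fun i => he (Fin.le_iff_val_le_val.2 (by simp only [Fin.val_castAdd, Fin.val_two]; omega))
  have htail := le_sq_sum_sub_sum_sq_of_forall_le tail le_rfl fun i => hnonneg _
  have hcross : 0 ≤ (∑ i, head i) * ∑ i, tail i :=
    mul_nonneg (Finset.sum_nonneg fun i _ => hnonneg _) (Finset.sum_nonneg fun i _ => hnonneg _)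
  push_cast at hhead htail
  have hle : e 2 ≤ 1 := by nlinarith
  have h2 := hnonneg 2
  omega

lemma eq_of_antitone_of_apply_seven_eq_zero {e : Fin 10 → ℤ} (he : Antitone e) (h7 : e 7 = 0)
    (h789 : 0 ≤ e 7 + e 8 + e 9) (hmod : ∀ i, 3 ∣ e i - e 7)
    (hP : (∑ i, e i) ^ 2 - ∑ i, e i ^ 2 = 18) : e = ![3, 3, 0, 0, 0, 0, 0, 0, 0, 0] := by
  have h9 : e 9 = 0 := by
    linarith [he (show (8 : Fin 10) ≤ 9 by decide), he (show (7 : Fin 10) ≤ 8 by decide)]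
  have hnonneg : ∀ i, 0 ≤ e i := fun i => h9.ge.trans (he (Fin.le_last i))
  have h2 : e 2 = 0 :=
    apply_two_eq_zero_of_nonneg he hnonneg (by simpa [h7] using hmod 2) hP.le
  have hvec : e = ![e 0, e 1, 0, 0, 0, 0, 0, 0, 0, 0] := by
    funext i
    fin_cases i <;> first | rfl | exact le_antisymm (h2 ▸ he (by decide)) (hnonneg _)
  have h01 : e 0 * e 1 = 9 := by
    rw [hvec] at hP
    simp only [Fin.sum_univ_succ, Matrix.cons_val_zero, Matrix.cons_val_succ, Finset.univ_unique,
      Fin.default_eq_zero, Matrix.cons_val_fin_one, Finset.sum_const_zero, add_zero, ne_eq,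
      OfNat.ofNat_ne_zero, not_false_eq_true, zero_pow] at hP
    linarith
  obtain ⟨a, ha⟩ := hmod 0
  obtain ⟨b, hb⟩ := hmod 1
  rw [h7, sub_zero] at ha hb
  have h10 : e 1 ≤ e 0 := he (by decide)
  have h1 := hnonneg 1
  have hb1 : 1 ≤ b := by nlinarith
  have hab : a = 1 ∧ b = 1 := by constructor <;> nlinarith
  rw [hvec, ha, hb, hab.1, hab.2]
  norm_num

lemma sum_sub_three_mul_eq {n : Fin 10 → ℤ} {m : ℤ} (hm : ∑ i, n i = 3 * m) :
    ∑ i, (m - 3 * n i) = m := by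
  rw [Finset.sum_sub_distrib, ← Finset.mul_sum, hm]
  simp only [Finset.sum_const, Finset.card_univ, Fintype.card_fin, Int.nsmul_eq_mul,
    Nat.cast_ofNat]
  ring

lemma sq_sum_sub_sum_sq_sub_three_mul {n : Fin 10 → ℤ} {m : ℤ} (hm : ∑ i, n i = 3 * m)
    (hsq : ∑ i, n i ^ 2 = m ^ 2 - 2) :
    (∑ i, (m - 3 * n i)) ^ 2 - ∑ i, (m - 3 * n i) ^ 2 = 18 := by
  simp only [sum_sub_three_mul_eq hm, sub_sq, Finset.sum_add_distrib, Finset.sum_sub_distrib,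
    mul_pow, ← Finset.mul_sum, mul_assoc, hm, hsq, Finset.sum_const, Finset.card_univ,
    Fintype.card_fin]
  ring

theorem unique_antidominant_norm_minus_two_general (γ : Fin 10 → ℤ)
    (hdvd : (3 : ℤ) ∣ ∑ i, γ i)
    (hq : qE10 γ = -2)
    (hdom : ∀ k : Fin 10, innerE10 γ (simpleRootE10 k) ≤ 0) :
    γ = ![1,1,2,2,2,2,2,2,2,2] := by
  obtain ⟨m, hm⟩ := hdvd
  have hmono := monotone_of_innerE10_simpleRootE10_nonpos hdom
  have hcap := add_add_le_of_innerE10_simpleRootE10_nine_nonpos hm (hdom 9)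
  have h78 : γ 7 ≤ γ 8 := hmono (by decide)
  have h89 : γ 8 ≤ γ 9 := hmono (by decide)
  set e : Fin 10 → ℤ := fun i => m - 3 * γ i with he_def
  have hanti : Antitone e := fun i j hij => by simp only [e]; linarith [hmono hij]
  have h789 : 0 ≤ e 7 + e 8 + e 9 := by simp only [e]; omega
  have hP : (∑ i, e i) ^ 2 - ∑ i, e i ^ 2 = 18 :=
    sq_sum_sub_sum_sq_sub_three_mul hm (sum_sq_eq_of_qE10_eq_neg_two hm hq)
  have h7 : e 7 = 0 := by
    have hbound := le_sq_sum_sub_sum_sq_of_antitone hanti (by simp only [e]; omega) h789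
    nlinarith
  have he : e = ![3, 3, 0, 0, 0, 0, 0, 0, 0, 0] :=
    eq_of_antitone_of_apply_seven_eq_zero hanti h7 h789 (fun i => ⟨γ 7 - γ i, by ring⟩) hP
  have hm6 : m = 6 := by
    rw [← sum_sub_three_mul_eq hm, ← he_def, he]
    decide
  have hγ : γ = fun i => (m - e i) / 3 := by
    funext i
    simp only [e]
    omega
  rw [hγ, he, hm6]
  decide

/-- Uniqueness of the anti-dominant imaginary root of norm `−2`: if `γ` has all
entries `≥ 1`, `Σ γᵢ ≡ 0 mod 3`, `q(γ) = −2`, and `⟨γ, αᵢ⟩ ≤ 0` for all ten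
simple roots, then `γ = (1,1,2,2,2,2,2,2,2,2)`, i.e. the root
`α₋₁ + 2α₀ + 4α₁ + 6α₂ + 8α₃ + 10α₄ + 12α₅ + 8α₆ + 4α₇ + 6α₈`. -/
theorem unique_antidominant_norm_minus_two (γ : Fin 10 → ℤ)
    (hpos : ∀ i, 1 ≤ γ i)
    (hdvd : (3 : ℤ) ∣ ∑ i, γ i)
    (hq : qE10 γ = -2)
    (hdom : ∀ k : Fin 10, innerE10 γ (simpleRootE10 k) ≤ 0) :
    γ = ![1,1,2,2,2,2,2,2,2,2] :=
  unique_antidominant_norm_minus_two_general γ hdvd hq hdom
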